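/- (Dichotomy underlying the cleaning lemma for Majorana codes) Let C ⊆ F_2^N be weakly self-dual with all codewords of even weight, and let M ⊆ {1,...,N}. Then M supports a logical operator (∃ v ∈ C^⊥ \ C with supp(v) ⊆ M) if and only if M is uncleanable (∃ w ∈ C^⊥ such that for all y ∈ C, (w + y)|_M ≠ 0). -/

import Mathlib

/-- Hamming weight of a binary vector. -/
def wt {ι : Type*} [Fintype ι] (x : ι → ZMod 2) : ℕ :=
  (Finset.univ.filter fun i => x i ≠ 0).card

/-- Support of a binary vector. -/
def supp {ι : Type*} [Fintype ι] (x : ι → ZMod 2) : Finset ι :=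
  Finset.univ.filter fun i => x i ≠ 0

/-- The `F₂` inner product. -/
def dot {ι : Type*} [Fintype ι] (x y : ι → ZMod 2) : ZMod 2 := ∑ i, x i * y i

/-- The dual code `C^⊥` of a linear code `C ⊆ F₂^ι`. -/
def dualCode {ι : Type*} [Fintype ι] (C : Submodule (ZMod 2) (ι → ZMod 2)) :
    Submodule (ZMod 2) (ι → ZMod 2) where
  carrier := {y | ∀ x ∈ C, dot x y = 0}
  add_mem' := by
    intro a b ha hb x hx
    have h : dot x (a + b) = dot x a + dot x b := by
      simp [dot, mul_add, Finset.sum_add_distrib]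
    simp only [Set.mem_setOf_eq] at *
    rw [h, ha x hx, hb x hx, add_zero]
  zero_mem' := by intro x _; simp [dot]
  smul_mem' := by
    intro c a ha x hx
    have h : dot x (c • a) = c * dot x a := by
      simp only [dot, Pi.smul_apply, smul_eq_mul, Finset.mul_sum]
      exact Finset.sum_congr rfl fun i _ => by ring
    simp only [Set.mem_setOf_eq] at *
    rw [h, ha x hx, mul_zero]

/-- Restriction of a vector to a subset `M` of coordinates (extended by zero). -/
def restrict {ι : Type*} [Fintype ι] [DecidableEq ι] (M : Finset ι)
    (y : ι → ZMod 2) : ι → ZMod 2 :=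
  fun i => if i ∈ M then y i else 0

/-- `C(M)`: the subcode of codewords of `C` supported inside `M` (viewed in `F₂^M`). -/
def subCode {ι : Type*} [Fintype ι] (C : Submodule (ZMod 2) (ι → ZMod 2))
    (M : Finset ι) : Set (ι → ZMod 2) :=
  {x | x ∈ C ∧ ∀ i ∉ M, x i = 0}

/-- `C^M`: the restriction (puncturing) of `C` to `M`, i.e. the vectors supported on `M`
that equal the restriction to `M` of some codeword of `C`. -/
def restCode {ι : Type*} [Fintype ι] [DecidableEq ι]
    (C : Submodule (ZMod 2) (ι → ZMod 2)) (M : Finset ι) : Set (ι → ZMod 2) :=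
  {z | ∃ y ∈ C, z = restrict M y}

/-! Proof idea: the dot product on `F₂^ι` is nondegenerate, so `(C^⊥)^⊥ = C`. A vector
`v ∈ C^⊥ \ C` supported on `M` therefore pairs nontrivially with some `w ∈ C^⊥`; as
`⟨v, y⟩ = 0` for `y ∈ C`, also `⟨v, w + y⟩ ≠ 0`, so `w + y` cannot vanish on `M`.
Conversely, if every element of `C^⊥` supported on `M` lies in `C`, then `w|_M` is
orthogonal to `(C^M)^⊥` for every `w ∈ C^⊥`, so it lies in the punctured code `C^M`,
which is exactly cleanability of `w`. -/

open LinearMap (BilinForm)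

section DotProduct

variable {ι K : Type*} [Fintype ι] [Field K]

lemma dotProductBilin_isRefl : (dotProductBilin K K : BilinForm K (ι → K)).IsRefl :=
  fun x y h => by simpa [dotProduct_comm] using h

lemma dotProductBilin_nondegenerate :
    (dotProductBilin K K : BilinForm K (ι → K)).Nondegenerate :=
  dotProductBilin_isRefl.nondegenerate_iff_separatingLeft.mpr
    fun _ hx => dotProduct_eq_zero_iff.mp hx

end DotProduct

section DualCode

variable {ι : Type*} [Fintype ι]

lemma mem_dualCode {C : Submodule (ZMod 2) (ι → ZMod 2)} {y : ι → ZMod 2} :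
    y ∈ dualCode C ↔ ∀ x ∈ C, dot x y = 0 := Iff.rfl

lemma dot_eq_dotProduct (x y : ι → ZMod 2) : dot x y = x ⬝ᵥ y := rfl

lemma dot_comm (x y : ι → ZMod 2) : dot x y = dot y x := dotProduct_comm x y

lemma dot_add_right (x y z : ι → ZMod 2) : dot x (y + z) = dot x y + dot x z :=
  dotProduct_add x y z

lemma dualCode_eq_orthogonal (C : Submodule (ZMod 2) (ι → ZMod 2)) :
    dualCode C = BilinForm.orthogonal (dotProductBilin (ZMod 2) (ZMod 2)) C := by
  ext y
  rw [BilinForm.mem_orthogonal_iff]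
  rfl

theorem dualCode_dualCode (C : Submodule (ZMod 2) (ι → ZMod 2)) :
    dualCode (dualCode C) = C := by
  rw [dualCode_eq_orthogonal, dualCode_eq_orthogonal,
    BilinForm.orthogonal_orthogonal (dotProductBilin_nondegenerate (K := ZMod 2))
      dotProductBilin_isRefl]

lemma exists_dot_ne_zero_of_notMem {C : Submodule (ZMod 2) (ι → ZMod 2)} {v : ι → ZMod 2}
    (hv : v ∉ C) : ∃ w ∈ dualCode C, dot w v ≠ 0 := by
  by_contra! h
  exact hv (dualCode_dualCode C ▸ h)

end DualCode

section Restrict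

variable {ι : Type*} [Fintype ι] [DecidableEq ι] (M : Finset ι)

def restrictₗ : (ι → ZMod 2) →ₗ[ZMod 2] (ι → ZMod 2) where
  toFun := restrict M
  map_add' a b := by ext i; by_cases hi : i ∈ M <;> simp [restrict, hi]
  map_smul' c a := by ext i; by_cases hi : i ∈ M <;> simp [restrict, hi]

lemma restrictₗ_apply (a : ι → ZMod 2) : restrictₗ M a = restrict M a := rfl

lemma restrict_add (a b : ι → ZMod 2) : restrict M (a + b) = restrict M a + restrict M b :=
  (restrictₗ M).map_add a b

lemma restrict_apply_of_notMem {i : ι} (hi : i ∉ M) (a : ι → ZMod 2) : restrict M a i = 0 :=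
  if_neg hi

lemma restrict_eq_self {a : ι → ZMod 2} (ha : ∀ i ∉ M, a i = 0) : restrict M a = a := by
  ext i
  by_cases hi : i ∈ M
  · exact if_pos hi
  · rw [restrict_apply_of_notMem M hi, ha i hi]

lemma dot_restrict (a b : ι → ZMod 2) : dot (restrict M a) b = dot a (restrict M b) :=
  Finset.sum_congr rfl fun i _ => by by_cases hi : i ∈ M <;> simp [restrict, hi]

lemma mem_dualCode_map_restrictₗ {C : Submodule (ZMod 2) (ι → ZMod 2)} {z : ι → ZMod 2} :
    z ∈ dualCode (C.map (restrictₗ M)) ↔ restrict M z ∈ dualCode C := by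
  simp only [mem_dualCode, Submodule.mem_map, forall_exists_index, and_imp,
    forall_apply_eq_imp_iff₂, restrictₗ_apply, dot_restrict]

lemma exists_restrict_add_eq_zero_iff {C : Submodule (ZMod 2) (ι → ZMod 2)}
    {w : ι → ZMod 2} :
    (∃ y ∈ C, restrict M (w + y) = 0) ↔ restrict M w ∈ C.map (restrictₗ M) := by
  simp only [restrict_add, add_eq_zero_iff_eq_neg, ZModModule.neg_eq_self, Submodule.mem_map,
    restrictₗ_apply, eq_comm]

end Restrict

section Cleaning

variable {ι : Type*} [Fintype ι] [DecidableEq ι]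
  {C : Submodule (ZMod 2) (ι → ZMod 2)} {M : Finset ι}

theorem exists_uncleanable_of_logical {v : ι → ZMod 2} (hv : v ∈ dualCode C) (hvC : v ∉ C)
    (hvM : ∀ i ∉ M, v i = 0) : ∃ w ∈ dualCode C, ∀ y ∈ C, restrict M (w + y) ≠ 0 := by
  obtain ⟨w, hw, hwv⟩ := exists_dot_ne_zero_of_notMem hvC
  refine ⟨w, hw, fun y hy hwy => hwv ?_⟩
  calc dot w v = dot v (w + y) := by rw [dot_add_right, dot_comm v y, hv y hy, add_zero, dot_comm]
    _ = dot (restrict M v) (w + y) := by rw [restrict_eq_self M hvM]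
    _ = 0 := by rw [dot_restrict, hwy, dot_eq_dotProduct, dotProduct_zero]

theorem exists_restrict_add_eq_zero_of_forall_logical_mem
    (hlog : ∀ v ∈ dualCode C, (∀ i ∉ M, v i = 0) → v ∈ C) {w : ι → ZMod 2}
    (hw : w ∈ dualCode C) : ∃ y ∈ C, restrict M (w + y) = 0 := by
  rw [exists_restrict_add_eq_zero_iff, ← dualCode_dualCode (C.map (restrictₗ M))]
  intro z hz
  have hzC : restrict M z ∈ C :=
    hlog _ ((mem_dualCode_map_restrictₗ M).mp hz) fun i hi => restrict_apply_of_notMem M hi z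
  rw [← dot_restrict]
  exact hw _ hzC

end Cleaning

theorem stmt_19_general {N : ℕ} (C : Submodule (ZMod 2) (Fin N → ZMod 2))
    (M : Finset (Fin N)) :
    (∃ v, v ∈ dualCode C ∧ v ∉ C ∧ ∀ i ∉ M, v i = 0) ↔
    (∃ w ∈ dualCode C, ∀ y ∈ C, restrict M (w + y) ≠ 0) := by
  constructor
  · rintro ⟨v, hv, hvC, hvM⟩
    exact exists_uncleanable_of_logical hv hvC hvM
  · rintro ⟨w, hw, huncleanable⟩
    by_contra hlog
    obtain ⟨y, hy, hwy⟩ := exists_restrict_add_eq_zero_of_forall_logical_mem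
      (fun v hv hvM => by_contra fun hvC => hlog ⟨v, hv, hvC, hvM⟩) hw
    exact huncleanable y hy hwy

/-- dichotomy underlying the cleaning lemma for Majorana codes: let
`C ⊆ F₂^N` be weakly self-dual with all codewords of even weight, and `M` a subset of the
coordinates.  Then `M` supports a logical operator (some `v ∈ C^⊥ \ C` with
`supp v ⊆ M`) if and only if `M` is uncleanable (some `w ∈ C^⊥` cannot be made to vanish
on `M` by adding any element of `C`). -/
theorem stmt_19 {N : ℕ} (C : Submodule (ZMod 2) (Fin N → ZMod 2))
    (hsd : C ≤ dualCode C)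
    (hEven : ∀ x ∈ C, Even (wt x))
    (M : Finset (Fin N)) :
    (∃ v, v ∈ dualCode C ∧ v ∉ C ∧ ∀ i ∉ M, v i = 0) ↔
    (∃ w ∈ dualCode C, ∀ y ∈ C, restrict M (w + y) ≠ 0) :=
  stmt_19_general C M
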